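/- Let the increments be almost surely nonnegative, i.e., P{X ≥ 0} = 1, let β := P{X = 0} ∈ [0,1), and let a > 0. Then E[e^{a ρ(x)}] < ∞ for some x ≥ 0 if and only if E[e^{a ρ(x)}] < ∞ for every x ≥ 0, and this holds if and only if a < -log β (where -log β := ∞ when β = 0). -/

import Mathlib

open MeasureTheory ProbabilityTheory Filter Set
open scoped ENNReal Topology

noncomputable section

/-- Partial sums of the increment sequence: the zero-delayed random walk
`S_0 = 0`, `S_n = X_0 + ⋯ + X_{n-1}`. -/
def rwS {Ω : Type*} (X : ℕ → Ω → ℝ) (n : ℕ) (ω : Ω) : ℝ := ∑ i ∈ Finset.range n, X i ω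

/-- First passage time `τ(x) = inf {n ∈ ℕ₀ : S_n > x}` into `(x, ∞)`,
with value `⊤` if the walk never exceeds `x`. -/
def firstPassage {Ω : Type*} (X : ℕ → Ω → ℝ) (x : ℝ) (ω : Ω) : ℕ∞ :=
  ⨅ (n : ℕ) (_ : x < rwS X n ω), (n : ℕ∞)

/-- Number of visits `N(x) = #{n ∈ ℕ : S_n ≤ x}` of the walk (after time 0) to `(-∞, x]`. -/
def numVisits {Ω : Type*} (X : ℕ → Ω → ℝ) (x : ℝ) (ω : Ω) : ℕ∞ :=
  {n : ℕ | 1 ≤ n ∧ rwS X n ω ≤ x}.encard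

/-- Last exit time `ρ(x)` from `(-∞, x]`: it is `sup {n ∈ ℕ : S_n ≤ x}` if
`inf_{n ≥ 1} S_n ≤ x` (the infimum taken in the extended reals), and `0` otherwise. -/
def lastExit {Ω : Type*} (X : ℕ → Ω → ℝ) (x : ℝ) (ω : Ω) : ℕ∞ :=
  if (⨅ (n : ℕ) (_ : 1 ≤ n), (rwS X n ω : EReal)) ≤ (x : EReal) then
    ⨆ (n : ℕ) (_ : 1 ≤ n ∧ rwS X n ω ≤ x), (n : ℕ∞)
  else 0

/-- `e^{a n}` for `n : ℕ∞`, equal to `∞` when `n = ∞`. -/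
def eexp (a : ℝ) (n : ℕ∞) : ℝ≥0∞ :=
  if n = ⊤ then ⊤ else ENNReal.ofReal (Real.exp (a * n.toNat))

/-- Exponential moment `E[e^{a T}]` (with values in `[0,∞]`) of an `ℕ∞`-valued random time. -/
def expMoment {Ω : Type*} [MeasurableSpace Ω] (P : Measure Ω) (a : ℝ) (T : Ω → ℕ∞) : ℝ≥0∞ :=
  ∫⁻ ω, eexp a (T ω) ∂P

/-- Laplace transform `φ(t) = E e^{-tY}` with values in `[0,∞]`. -/
def laplace {Ω : Type*} [MeasurableSpace Ω] (P : Measure Ω) (Y : Ω → ℝ) (t : ℝ) : ℝ≥0∞ :=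
  ∫⁻ ω, ENNReal.ofReal (Real.exp (-t * Y ω)) ∂P

/-- `R := -log inf_{t ≥ 0} E e^{-tY}`. -/
def Rconst {Ω : Type*} [MeasurableSpace Ω] (P : Measure Ω) (Y : Ω → ℝ) : ℝ :=
  -Real.log (⨅ t ∈ Set.Ici (0:ℝ), laplace P Y t).toReal

/-- The law of `Y` under `P` is concentrated on the lattice `l·ℤ`. -/
def ConcOnLattice {Ω : Type*} [MeasurableSpace Ω] (P : Measure Ω) (Y : Ω → ℝ) (l : ℝ) : Prop :=
  P {ω | ∃ k : ℤ, Y ω = l * k} = 1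

/-- The law of `Y` under `P` is non-lattice: it is not concentrated on any lattice `l·ℤ`, `l > 0`. -/
def NonLattice {Ω : Type*} [MeasurableSpace Ω] (P : Measure Ω) (Y : Ω → ℝ) : Prop :=
  ¬ ∃ l > (0:ℝ), ConcOnLattice P Y l

/-- The law of `Y` under `P` is lattice with span `l`: it is concentrated on `l·ℤ` and `l` is
maximal with this property. -/
def LatticeSpan {Ω : Type*} [MeasurableSpace Ω] (P : Measure Ω) (Y : Ω → ℝ) (l : ℝ) : Prop :=
  0 < l ∧ ConcOnLattice P Y l ∧ ∀ l' > (0:ℝ), ConcOnLattice P Y l' → l' ≤ l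

/-- The mean `E_γ[S_τ] = E[S_τ e^{aτ} e^{-γ S_τ}]` of `S_τ` under the exponentially tilted
measure, computed in `[0,∞]` (here `τ = τ(0)`; on `{τ = ∞}` the integrand is read as `0`). -/
def tiltedMeanStau {Ω : Type*} [MeasurableSpace Ω] (P : Measure Ω) (X : ℕ → Ω → ℝ)
    (a γ : ℝ) : ℝ≥0∞ :=
  ∫⁻ ω, ENNReal.ofReal (rwS X (firstPassage X 0 ω).toNat ω *
    Real.exp (a * ((firstPassage X 0 ω).toNat : ℝ)) *
    Real.exp (-γ * rwS X (firstPassage X 0 ω).toNat ω)) ∂P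

/-!
For nonnegative increments, `ρ(x) ≥ n + 1` iff `S_{n+1} ≤ x`, so summing by layers
`E e^{aρ(x)} = 1 + ∑ₙ (e^{a(n+1)} - e^{an}) P{S_{n+1} ≤ x}`.
The series converges iff `β < e^{-a}`. Indeed `P{S_n ≤ x} ≥ P{X_1 = ⋯ = X_n = 0} = βⁿ` for `x ≥ 0`,
while the Chernoff bound gives `P{S_n ≤ x} ≤ e^{θx} φ(θ)ⁿ` with `φ(θ) = E e^{-θX}`, and
`φ(θ) → β` as `θ → ∞`.
-/

open Real

def expStep (a : ℝ) (n : ℕ) : ℝ≥0∞ := ENNReal.ofReal (exp (a * (n + 1)) - exp (a * n))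

lemma sum_range_expStep {a : ℝ} (ha : 0 ≤ a) (k : ℕ) :
    ∑ n ∈ Finset.range k, expStep a n = ENNReal.ofReal (exp (a * k) - 1) := by
  have hmono : ∀ n : ℕ, exp (a * n) ≤ exp (a * (n + 1)) := fun n =>
    exp_le_exp.2 (by nlinarith)
  simp only [expStep]
  rw [← ENNReal.ofReal_sum_of_nonneg fun n _ => sub_nonneg.2 (hmono n)]
  have := Finset.sum_range_sub (fun n : ℕ => exp (a * n)) k
  push_cast at this
  rw [Finset.sum_sub_distrib]
  simpa using congrArg ENNReal.ofReal this

lemma expStep_mul_ofReal_exp_neg_pow (a : ℝ) (n : ℕ) :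
    expStep a n * ENNReal.ofReal (exp (-a)) ^ (n + 1) = ENNReal.ofReal (1 - exp (-a)) := by
  rw [expStep, ← ENNReal.ofReal_pow (exp_nonneg _), ← ENNReal.ofReal_mul' (by positivity),
    ← exp_nat_mul]
  congr 1
  rw [sub_mul, ← exp_add, ← exp_add]
  push_cast
  ring_nf
  rw [exp_zero]

lemma expStep_le_ofReal_exp_pow {a : ℝ} (n : ℕ) :
    expStep a n ≤ ENNReal.ofReal (exp a) ^ (n + 1) := by
  rw [← ENNReal.ofReal_pow (exp_nonneg _), ← exp_nat_mul]
  refine ENNReal.ofReal_le_ofReal ((sub_le_self _ (exp_nonneg _)).trans_eq ?_)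
  push_cast
  ring_nf

lemma eexp_eq_one_add_tsum {a : ℝ} (ha : 0 < a) (m : ℕ∞) :
    eexp a m = 1 + ∑' n : ℕ, if ((n + 1 : ℕ) : ℕ∞) ≤ m then expStep a n else 0 := by
  cases m with
  | top =>
    simp only [eexp, if_true, le_top]
    rw [eq_comm, ENNReal.add_eq_top]
    right
    have hlim : Tendsto (fun k : ℕ => ENNReal.ofReal (exp (a * k) - 1)) atTop (𝓝 ⊤) :=
      ENNReal.tendsto_ofReal_atTop.comp <| tendsto_atTop_add_const_right _ _ <|
        tendsto_exp_atTop.comp <| tendsto_natCast_atTop_atTop.const_mul_atTop ha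
    refine tendsto_nhds_unique (ENNReal.tendsto_nat_tsum _) ?_
    simpa only [sum_range_expStep ha.le] using hlim
  | coe k =>
    have hk : ∀ n : ℕ, ((n + 1 : ℕ) : ℕ∞) ≤ k ↔ n ∈ Finset.range k := fun n => by
      rw [Nat.cast_le, Finset.mem_range]
      omega
    simp_rw [hk]
    rw [tsum_eq_sum (s := Finset.range k) fun n hn => if_neg hn, Finset.sum_ite_mem,
      Finset.inter_self, sum_range_expStep ha.le, eexp, if_neg (ENat.natCast_ne_top k),
      ENat.toNat_natCast, ← ENNReal.ofReal_one, ← ENNReal.ofReal_add zero_le_one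
      (sub_nonneg.2 (one_le_exp (by positivity))), add_sub_cancel]

section RandomWalk

variable {Ω : Type*} {X : ℕ → Ω → ℝ}

lemma monotone_rwS {ω : Ω} (hω : ∀ i, 0 ≤ X i ω) : Monotone fun n => rwS X n ω :=
  fun _ _ hmn => Finset.sum_le_sum_of_subset_of_nonneg (Finset.range_subset_range.2 hmn)
    fun i _ _ => hω i

lemma succ_le_lastExit_iff {ω : Ω} (hω : ∀ i, 0 ≤ X i ω) (x : ℝ) (n : ℕ) :
    ((n + 1 : ℕ) : ℕ∞) ≤ lastExit X x ω ↔ rwS X (n + 1) ω ≤ x := by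
  constructor
  · intro h
    unfold lastExit at h
    split_ifs at h
    · by_contra! hgt
      have hle : (⨆ (m : ℕ) (_ : 1 ≤ m ∧ rwS X m ω ≤ x), (m : ℕ∞)) ≤ n := by
        refine iSup₂_le fun m hm => Nat.cast_le.2 ?_
        by_contra! hnm
        exact (hgt.trans_le (monotone_rwS hω hnm)).not_ge hm.2
      exact absurd (Nat.cast_le.1 (h.trans hle)) (by omega)
    · simp at h
  · intro h
    have hinf : (⨅ (m : ℕ) (_ : 1 ≤ m), (rwS X m ω : EReal)) ≤ x :=
      (iInf₂_le (n + 1) (Nat.le_add_left 1 n)).trans (EReal.coe_le_coe_iff.2 h)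
    rw [lastExit, if_pos hinf]
    exact le_iSup₂ (f := fun (m : ℕ) (_ : 1 ≤ m ∧ rwS X m ω ≤ x) => (m : ℕ∞)) (n + 1)
      ⟨Nat.le_add_left 1 n, h⟩

variable [MeasurableSpace Ω] {P : Measure Ω}

lemma measurable_rwS (hmeas : ∀ i, Measurable (X i)) (n : ℕ) : Measurable (rwS X n) :=
  Finset.measurable_sum _ fun i _ => hmeas i

lemma ae_forall_nonneg_of_map_eq (hmeas : ∀ i, Measurable (X i)) [IsProbabilityMeasure P]
    (hident : ∀ i, P.map (X i) = P.map (X 0)) (hnonneg : P {ω | 0 ≤ X 0 ω} = 1) :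
    ∀ᵐ ω ∂P, ∀ i, 0 ≤ X i ω := by
  refine ae_all_iff.2 fun i => ?_
  have hi : P {ω | 0 ≤ X i ω} = 1 := by
    rw [← hnonneg]
    exact IdentDistrib.measure_mem_eq ⟨(hmeas i).aemeasurable, (hmeas 0).aemeasurable, hident i⟩
      measurableSet_Ici
  exact (ae_iff_measure_eq (measurableSet_le measurable_const (hmeas i)).nullMeasurableSet).2
    (by rw [hi, measure_univ])

lemma expMoment_lastExit_eq_one_add_tsum [IsProbabilityMeasure P]
    (hmeas : ∀ i, Measurable (X i)) (hA : ∀ᵐ ω ∂P, ∀ i, 0 ≤ X i ω) {a : ℝ} (ha : 0 < a)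
    (x : ℝ) :
    expMoment P a (lastExit X x) = 1 + ∑' n : ℕ, expStep a n * P {ω | rwS X (n + 1) ω ≤ x} := by
  have hset : ∀ n : ℕ, MeasurableSet {ω | rwS X (n + 1) ω ≤ x} := fun n =>
    measurableSet_le (measurable_rwS hmeas _) measurable_const
  have hlayers : ∀ᵐ ω ∂P, eexp a (lastExit X x ω) =
      1 + ∑' n : ℕ, {ω | rwS X (n + 1) ω ≤ x}.indicator (fun _ => expStep a n) ω := by
    filter_upwards [hA] with ω hω
    simp only [eexp_eq_one_add_tsum ha, succ_le_lastExit_iff hω, Set.indicator_apply,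
      Set.mem_ofPred_eq]
  rw [expMoment, lintegral_congr_ae hlayers, lintegral_add_left measurable_const, lintegral_const,
    measure_univ, mul_one, lintegral_tsum fun n =>
    (measurable_const.indicator (hset n)).aemeasurable]
  simp only [lintegral_indicator_const (hset _)]

lemma laplace_rwS (hmeas : ∀ i, Measurable (X i)) (hindep : iIndepFun X P)
    (hident : ∀ i, P.map (X i) = P.map (X 0)) (θ : ℝ) (n : ℕ) :
    laplace P (rwS X n) θ = laplace P (X 0) θ ^ n := by
  have hg : Measurable fun y : ℝ => ENNReal.ofReal (exp (-θ * y)) := by fun_prop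
  have hprod : ∀ ω, ENNReal.ofReal (exp (-θ * rwS X n ω)) =
      ∏ i ∈ Finset.range n, ENNReal.ofReal (exp (-θ * X i ω)) := by
    intro ω
    rw [rwS, Finset.mul_sum, exp_sum, ENNReal.ofReal_prod_of_nonneg fun i _ => exp_nonneg _]
  rw [laplace, funext hprod, lintegral_prod_eq_prod_lintegral_of_indepFun _
    (fun i ω => ENNReal.ofReal (exp (-θ * X i ω))) (hindep.comp (fun _ => _) fun _ => hg)
    fun i => hg.comp (hmeas i)]
  have hlaw : ∀ i, ∫⁻ ω, ENNReal.ofReal (exp (-θ * X i ω)) ∂P = laplace P (X 0) θ := fun i =>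
    ((IdentDistrib.mk (hmeas i).aemeasurable (hmeas 0).aemeasurable (hident i)).comp hg)
      |>.lintegral_eq
  rw [Finset.prod_congr rfl fun i _ => hlaw i, Finset.prod_const, Finset.card_range]

lemma measure_le_le_exp_mul_laplace {Y : Ω → ℝ} (hY : Measurable Y) {θ : ℝ} (hθ : 0 ≤ θ)
    (x : ℝ) : P {ω | Y ω ≤ x} ≤ ENNReal.ofReal (exp (θ * x)) * laplace P Y θ := by
  have hset : MeasurableSet {ω | Y ω ≤ x} := measurableSet_le hY measurable_const
  rw [← lintegral_indicator_one hset, laplace, ← lintegral_const_mul' _ _ ENNReal.ofReal_ne_top]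
  refine lintegral_mono fun ω => ?_
  simp only [Set.indicator_apply, Set.mem_ofPred_eq, Pi.one_apply]
  split_ifs with hω
  · rw [← ENNReal.ofReal_mul (exp_nonneg _), ← exp_add, ENNReal.one_le_ofReal, one_le_exp_iff]
    nlinarith
  · exact bot_le

lemma tendsto_laplace_atTop [IsFiniteMeasure P] {Y : Ω → ℝ} (hY : Measurable Y)
    (h0 : ∀ᵐ ω ∂P, 0 ≤ Y ω) : Tendsto (laplace P Y) atTop (𝓝 (P {ω | Y ω = 0})) := by
  have hset : MeasurableSet {ω | Y ω = 0} := hY (measurableSet_singleton 0)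
  rw [← lintegral_indicator_one hset]
  refine tendsto_lintegral_filter_of_dominated_convergence (fun _ => 1)
    (.of_forall fun θ => by fun_prop) ?_ (by simp) ?_
  · filter_upwards [eventually_ge_atTop 0] with θ hθ
    filter_upwards [h0] with ω hω
    rw [ENNReal.ofReal_le_one, exp_le_one_iff]
    nlinarith
  · filter_upwards [h0] with ω hω
    rcases hω.lt_or_eq with hpos | hzero
    · rw [Set.indicator_of_notMem (show ω ∉ {ω | Y ω = 0} from hpos.ne')]
      simpa [Function.comp_def] using (ENNReal.continuous_ofReal.tendsto 0).comp <|
        tendsto_exp_atBot.comp <| tendsto_neg_atTop_atBot.atBot_mul_const hpos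
    · simp [← hzero]

lemma pow_measure_eq_zero_le_measure_rwS_le (hmeas : ∀ i, Measurable (X i))
    (hindep : iIndepFun X P) (hident : ∀ i, P.map (X i) = P.map (X 0)) {x : ℝ} (hx : 0 ≤ x)
    (n : ℕ) : P {ω | X 0 ω = 0} ^ n ≤ P {ω | rwS X n ω ≤ x} := by
  have hsub : (⋂ i ∈ Finset.range n, X i ⁻¹' {0}) ⊆ {ω | rwS X n ω ≤ x} := fun ω hω => by
    simp only [Set.mem_iInter, Set.mem_preimage, Set.mem_singleton_iff] at hω
    simpa [rwS, Finset.sum_eq_zero hω] using hx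
  refine le_trans (le_of_eq ?_) (measure_mono hsub)
  rw [hindep.meas_biInter fun i _ => ⟨{0}, measurableSet_singleton 0, rfl⟩,
    Finset.prod_congr rfl fun i _ => IdentDistrib.measure_mem_eq
      ⟨(hmeas i).aemeasurable, (hmeas 0).aemeasurable, hident i⟩ (measurableSet_singleton 0),
    Finset.prod_const, Finset.card_range]
  rfl

variable [IsProbabilityMeasure P]

lemma expMoment_lastExit_lt_top (hmeas : ∀ i, Measurable (X i)) (hindep : iIndepFun X P)
    (hident : ∀ i, P.map (X i) = P.map (X 0)) (hA : ∀ᵐ ω ∂P, ∀ i, 0 ≤ X i ω) {a : ℝ}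
    (ha : 0 < a) (hβ : P {ω | X 0 ω = 0} < ENNReal.ofReal (exp (-a))) (x : ℝ) :
    expMoment P a (lastExit X x) < ⊤ := by
  obtain ⟨θ, hθL, hθ⟩ := (((tendsto_laplace_atTop (hmeas 0)
    (hA.mono fun ω hω => hω 0)).eventually_lt_const hβ).and (eventually_ge_atTop 0)).exists
  set r := ENNReal.ofReal (exp a) * laplace P (X 0) θ
  have hr : r < 1 := by
    calc r < ENNReal.ofReal (exp a) * ENNReal.ofReal (exp (-a)) :=
          ENNReal.mul_lt_mul_right (by simp [exp_pos]) ENNReal.ofReal_ne_top hθL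
      _ = 1 := by rw [← ENNReal.ofReal_mul (exp_nonneg _), ← exp_add, add_neg_cancel, exp_zero,
          ENNReal.ofReal_one]
  have hterm : ∀ n : ℕ, expStep a n * P {ω | rwS X (n + 1) ω ≤ x} ≤
      ENNReal.ofReal (exp (θ * x)) * r ^ (n + 1) := fun n =>
    calc expStep a n * P {ω | rwS X (n + 1) ω ≤ x}
        ≤ ENNReal.ofReal (exp a) ^ (n + 1) *
          (ENNReal.ofReal (exp (θ * x)) * laplace P (X 0) θ ^ (n + 1)) := by
          rw [← laplace_rwS hmeas hindep hident]
          exact mul_le_mul' (expStep_le_ofReal_exp_pow n)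
            (measure_le_le_exp_mul_laplace (measurable_rwS hmeas _) hθ x)
      _ = ENNReal.ofReal (exp (θ * x)) * r ^ (n + 1) := by rw [mul_pow]; ring
  rw [expMoment_lastExit_eq_one_add_tsum hmeas hA ha]
  refine ENNReal.add_lt_top.2 ⟨ENNReal.one_lt_top, (ENNReal.tsum_le_tsum hterm).trans_lt ?_⟩
  rw [ENNReal.tsum_mul_left, ENNReal.tsum_geometric_add_one]
  exact ENNReal.mul_lt_top ENNReal.ofReal_lt_top (ENNReal.mul_lt_top (hr.trans ENNReal.one_lt_top)
    (ENNReal.inv_lt_top.2 (tsub_pos_of_lt hr)))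

lemma expMoment_lastExit_eq_top (hmeas : ∀ i, Measurable (X i)) (hindep : iIndepFun X P)
    (hident : ∀ i, P.map (X i) = P.map (X 0)) (hA : ∀ᵐ ω ∂P, ∀ i, 0 ≤ X i ω) {a : ℝ}
    (ha : 0 < a) (hβ : ENNReal.ofReal (exp (-a)) ≤ P {ω | X 0 ω = 0}) {x : ℝ} (hx : 0 ≤ x) :
    expMoment P a (lastExit X x) = ⊤ := by
  have hterm : ∀ n : ℕ, ENNReal.ofReal (1 - exp (-a)) ≤
      expStep a n * P {ω | rwS X (n + 1) ω ≤ x} := fun n => by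
    rw [← expStep_mul_ofReal_exp_neg_pow]
    exact mul_le_mul' le_rfl ((pow_le_pow_left' hβ _).trans
      (pow_measure_eq_zero_le_measure_rwS_le hmeas hindep hident hx _))
  have hpos : ENNReal.ofReal (1 - exp (-a)) ≠ 0 := by simpa using ha
  rw [expMoment_lastExit_eq_one_add_tsum hmeas hA ha, eq_top_iff]
  exact ((ENNReal.tsum_const_eq_top_of_ne_zero hpos).ge.trans
    (ENNReal.tsum_le_tsum hterm)).trans le_add_self

lemma expMoment_lastExit_lt_top_iff (hmeas : ∀ i, Measurable (X i)) (hindep : iIndepFun X P)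
    (hident : ∀ i, P.map (X i) = P.map (X 0)) (hA : ∀ᵐ ω ∂P, ∀ i, 0 ≤ X i ω) {a : ℝ}
    (ha : 0 < a) {x : ℝ} (hx : 0 ≤ x) :
    expMoment P a (lastExit X x) < ⊤ ↔ P {ω | X 0 ω = 0} < ENNReal.ofReal (exp (-a)) := by
  refine ⟨fun hfin => ?_, fun hβ => expMoment_lastExit_lt_top hmeas hindep hident hA ha hβ x⟩
  by_contra! hβ
  exact hfin.ne (expMoment_lastExit_eq_top hmeas hindep hident hA ha hβ hx)

end RandomWalk

lemma eq_zero_or_lt_neg_log_iff {b : ℝ} (hb : 0 ≤ b) (a : ℝ) :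
    b = 0 ∨ a < -log b ↔ b < exp (-a) := by
  rcases hb.eq_or_lt with rfl | hb
  · simp [exp_pos]
  · rw [lt_neg, ← log_lt_iff_lt_exp hb]
    simp [hb.ne']

theorem exp_moment_lastExit_nonneg_increments_general
    {Ω : Type*} [MeasurableSpace Ω] (P : Measure Ω) [IsProbabilityMeasure P]
    (X : ℕ → Ω → ℝ) (hmeas : ∀ i, Measurable (X i))
    (hindep : iIndepFun X P)
    (hident : ∀ i, P.map (X i) = P.map (X 0))
    (hnonneg : P {ω | 0 ≤ X 0 ω} = 1)
    (a : ℝ) (ha : 0 < a) :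
    ((∃ x ≥ (0:ℝ), expMoment P a (lastExit X x) < ⊤) ↔
      ((P {ω | X 0 ω = 0}).toReal = 0 ∨ a < -Real.log (P {ω | X 0 ω = 0}).toReal)) ∧
    ((∀ x ≥ (0:ℝ), expMoment P a (lastExit X x) < ⊤) ↔
      ((P {ω | X 0 ω = 0}).toReal = 0 ∨ a < -Real.log (P {ω | X 0 ω = 0}).toReal)) := by
  have hA := ae_forall_nonneg_of_map_eq hmeas hident hnonneg
  have hβ : (P {ω | X 0 ω = 0}).toReal = 0 ∨ a < -log (P {ω | X 0 ω = 0}).toReal ↔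
      P {ω | X 0 ω = 0} < ENNReal.ofReal (exp (-a)) := by
    rw [eq_zero_or_lt_neg_log_iff ENNReal.toReal_nonneg, ← ENNReal.ofReal_lt_ofReal_iff
      (exp_pos _), ENNReal.ofReal_toReal (measure_ne_top _ _)]
  have key : ∀ x ≥ (0:ℝ), expMoment P a (lastExit X x) < ⊤ ↔
      (P {ω | X 0 ω = 0}).toReal = 0 ∨ a < -log (P {ω | X 0 ω = 0}).toReal := fun x hx =>
    (expMoment_lastExit_lt_top_iff hmeas hindep hident hA ha hx).trans hβ.symm
  exact ⟨⟨fun ⟨x, hx, hfin⟩ => (key x hx).1 hfin, fun h => ⟨0, le_rfl, (key 0 le_rfl).2 h⟩⟩,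
    ⟨fun h => (key 0 le_rfl).1 (h 0 le_rfl), fun h x hx => (key x hx).2 h⟩⟩

/-- For a random walk with a.s. nonnegative i.i.d. increments with
`β := P{X = 0} < 1` and `a > 0`, `E e^{aρ(x)} < ∞` for some `x ≥ 0` iff for every `x ≥ 0`,
iff `a < -log β` (with `-log 0 := ∞`). -/
theorem exp_moment_lastExit_nonneg_increments
    {Ω : Type*} [MeasurableSpace Ω] (P : Measure Ω) [IsProbabilityMeasure P]
    (X : ℕ → Ω → ℝ) (hmeas : ∀ i, Measurable (X i))
    (hindep : iIndepFun X P)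
    (hident : ∀ i, P.map (X i) = P.map (X 0))
    (hnonneg : P {ω | 0 ≤ X 0 ω} = 1)
    (hβlt : P {ω | X 0 ω = 0} < 1)
    (a : ℝ) (ha : 0 < a) :
    ((∃ x ≥ (0:ℝ), expMoment P a (lastExit X x) < ⊤) ↔
      ((P {ω | X 0 ω = 0}).toReal = 0 ∨ a < -Real.log (P {ω | X 0 ω = 0}).toReal)) ∧
    ((∀ x ≥ (0:ℝ), expMoment P a (lastExit X x) < ⊤) ↔
      ((P {ω | X 0 ω = 0}).toReal = 0 ∨ a < -Real.log (P {ω | X 0 ω = 0}).toReal)) :=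
  exp_moment_lastExit_nonneg_increments_general P X hmeas hindep hident hnonneg a ha
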